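/- arXiv:1810.02434 — 4 statements merged into one kernel-verified Lean document; each statement's English description precedes it below -/
import Mathlib

section
/- Suppose the high-level theory Δ_h is a sound abstraction of Δ_l relative to refinement mapping m (every model of Δ_l has an m-isomorphic model of Δ_h), and all literal weights equal 1 (unweighted setting). Then for every high-level formula φ: (a) if Pr(m(φ), Δ_l, w_l) > 0 then Pr(φ, Δ_h, w_h) > 0; and (b) if Pr(φ, Δ_h, w_h) = 1 then Pr(m(φ), Δ_l, w_l) = 1. -/
/-- Propositional formulas over atoms of type `α`. -/
inductive Form (α : Type) where
  | tru : Form α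
  | atom : α → Form α
  | neg : Form α → Form α
  | conj : Form α → Form α → Form α
  | disj : Form α → Form α → Form α

/-- Truth value of a formula in a model `M : α → Bool`. -/
def Form.eval {α : Type} (M : α → Bool) : Form α → Bool
  | .tru => true
  | .atom a => M a
  | .neg φ => !(φ.eval M)
  | .conj φ ψ => φ.eval M && ψ.eval M
  | .disj φ ψ => φ.eval M || ψ.eval M

/-- Homomorphic extension of a refinement mapping `m` on atoms to all formulas. -/
def Form.map {α β : Type} (m : α → Form β) : Form α → Form β
  | .tru => .tru
  | .atom a => m a
  | .neg φ => .neg (φ.map m)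
  | .conj φ ψ => .conj (φ.map m) (ψ.map m)
  | .disj φ ψ => .disj (φ.map m) (ψ.map m)

/-- The set of atoms mentioned in a formula. -/
def Form.atoms {α : Type} [DecidableEq α] : Form α → Finset α
  | .tru => ∅
  | .atom a => {a}
  | .neg φ => φ.atoms
  | .conj φ ψ => φ.atoms ∪ ψ.atoms
  | .disj φ ψ => φ.atoms ∪ ψ.atoms

/-- Weighted model count of `Δ` under literal weights `w` (`w a true` is the
weight of the positive literal on atom `a`, `w a false` of the negative one). -/
noncomputable def WMC {α : Type} [Fintype α] [DecidableEq α]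
    (Δ : Form α) (w : α → Bool → ℝ) : ℝ :=
  ∑ M ∈ Finset.univ.filter (fun M : α → Bool => Δ.eval M = true), ∏ a, w a (M a)

/-- `Pr(φ, Δ, w) = WMC(φ ∧ Δ, w) / WMC(Δ, w)`. -/
noncomputable def Pr {α : Type} [Fintype α] [DecidableEq α]
    (φ Δ : Form α) (w : α → Bool → ℝ) : ℝ :=
  WMC (Form.conj φ Δ) w / WMC Δ w

/-- `Mh` is `m`-isomorphic to `Ml`. -/
def Iso {α β : Type} (m : α → Form β) (Mh : α → Bool) (Ml : β → Bool) : Prop :=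
  ∀ a : α, Mh a = (m a).eval Ml


lemma eval_map {α β : Type} (m : α → Form β) (Mh : α → Bool) (Ml : β → Bool)
    (h : Iso m Mh Ml) : ∀ φ : Form α, (φ.map m).eval Ml = φ.eval Mh := by
  intro φ
  induction φ with
  | tru => rfl
  | atom a => exact (h a).symm
  | neg φ ih => simp [Form.map, Form.eval, ih]
  | conj φ ψ ih1 ih2 => simp [Form.map, Form.eval, ih1, ih2]
  | disj φ ψ ih1 ih2 => simp [Form.map, Form.eval, ih1, ih2]

lemma WMC_one {α : Type} [Fintype α] [DecidableEq α] (Δ : Form α) :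
    WMC Δ (fun _ _ => (1:ℝ)) =
      (Finset.univ.filter (fun M : α → Bool => Δ.eval M = true)).card := by
  simp [WMC]

lemma WMC_nonneg {α : Type} [Fintype α] [DecidableEq α] (Δ : Form α) :
    0 ≤ WMC Δ (fun _ _ => (1:ℝ)) := by
  rw [WMC_one]; positivity

lemma WMC_pos {α : Type} [Fintype α] [DecidableEq α] (Δ : Form α)
    (h : ∃ M : α → Bool, Δ.eval M = true) :
    0 < WMC Δ (fun _ _ => (1:ℝ)) := by
  rw [WMC_one]
  obtain ⟨M, hM⟩ := h
  have : 0 < (Finset.univ.filter (fun M : α → Bool => Δ.eval M = true)).card :=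
    Finset.card_pos.mpr ⟨M, by simp [hM]⟩
  exact_mod_cast this

theorem stmt5 {α β : Type} [Fintype α] [DecidableEq α] [Fintype β] [DecidableEq β]
    (Δh : Form α) (Δl : Form β) (m : α → Form β)
    (hsath : ∃ M : α → Bool, Δh.eval M = true)
    (hsatl : ∃ M : β → Bool, Δl.eval M = true)
    (hsound : ∀ Ml : β → Bool, Δl.eval Ml = true →
      ∃ Mh : α → Bool, Δh.eval Mh = true ∧ Iso m Mh Ml) :
    ∀ φ : Form α,
      (0 < Pr (φ.map m) Δl (fun _ _ => (1:ℝ)) → 0 < Pr φ Δh (fun _ _ => (1:ℝ))) ∧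
      (Pr φ Δh (fun _ _ => (1:ℝ)) = 1 → Pr (φ.map m) Δl (fun _ _ => (1:ℝ)) = 1) := by
  intro φ
  have hDh := WMC_pos Δh hsath
  have hDl := WMC_pos Δl hsatl
  constructor
  · intro hpos
    have hnum : 0 < WMC (Form.conj (φ.map m) Δl) (fun _ _ => (1:ℝ)) := by
      by_contra h
      have h0 : WMC (Form.conj (φ.map m) Δl) (fun _ _ => (1:ℝ)) = 0 :=
        le_antisymm (not_lt.mp h) (WMC_nonneg _)
      rw [Pr, h0, zero_div] at hpos
      exact lt_irrefl _ hpos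
    have : ∃ Ml : β → Bool, (Form.conj (φ.map m) Δl).eval Ml = true := by
      by_contra h
      push_neg at h
      have : (Finset.univ.filter
          (fun M : β → Bool => (Form.conj (φ.map m) Δl).eval M = true)) = ∅ := by
        apply Finset.filter_eq_empty_iff.mpr
        intro M _
        exact h M
      rw [WMC_one, this] at hnum
      simp at hnum
    obtain ⟨Ml, hMl⟩ := this
    simp only [Form.eval, Bool.and_eq_true] at hMl
    obtain ⟨Mh, hMh, hiso⟩ := hsound Ml hMl.2
    have hφ : φ.eval Mh = true := by rw [← eval_map m Mh Ml hiso]; exact hMl.1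
    have hnum2 : 0 < WMC (Form.conj φ Δh) (fun _ _ => (1:ℝ)) :=
      WMC_pos _ ⟨Mh, by simp [Form.eval, hφ, hMh]⟩
    exact div_pos hnum2 hDh
  · intro h1
    have heq : WMC (Form.conj φ Δh) (fun _ _ => (1:ℝ)) = WMC Δh (fun _ _ => (1:ℝ)) := by
      have := (div_eq_one_iff_eq (ne_of_gt hDh)).mp h1
      exact this
    -- every model of Δh satisfies φ
    have hall : ∀ Mh : α → Bool, Δh.eval Mh = true → φ.eval Mh = true := by
      intro Mh hMh
      by_contra hφ
      rw [WMC_one, WMC_one] at heq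
      have hsub : (Finset.univ.filter
          (fun M : α → Bool => (Form.conj φ Δh).eval M = true)) ⊆
          (Finset.univ.filter (fun M : α → Bool => Δh.eval M = true)) := by
        intro M hM
        simp only [Finset.mem_filter, Form.eval, Bool.and_eq_true] at hM ⊢
        exact ⟨hM.1, hM.2.2⟩
      have hmem : Mh ∈ (Finset.univ.filter (fun M : α → Bool => Δh.eval M = true)) := by
        simp [hMh]
      have hnmem : Mh ∉ (Finset.univ.filter
          (fun M : α → Bool => (Form.conj φ Δh).eval M = true)) := by
        simp [Form.eval, hMh]
        simpa using hφ
      have hcard := Finset.card_lt_card (Finset.ssubset_iff_of_subset hsub |>.mpr ⟨Mh, hmem, hnmem⟩)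
      have : ((Finset.univ.filter
          (fun M : α → Bool => (Form.conj φ Δh).eval M = true)).card : ℝ) <
          ((Finset.univ.filter (fun M : α → Bool => Δh.eval M = true)).card : ℝ) := by
        exact_mod_cast hcard
      linarith [heq]
    have hsetl : (Finset.univ.filter
        (fun M : β → Bool => (Form.conj (φ.map m) Δl).eval M = true)) =
        (Finset.univ.filter (fun M : β → Bool => Δl.eval M = true)) := by
      apply Finset.ext
      intro Ml
      simp only [Finset.mem_filter, Finset.mem_univ, true_and, Form.eval, Bool.and_eq_true]
      constructor
      · rintro ⟨_, h⟩; exact h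
      · intro h
        obtain ⟨Mh, hMh, hiso⟩ := hsound Ml h
        exact ⟨by rw [eval_map m Mh Ml hiso]; exact hall Mh hMh, h⟩
    rw [Pr, WMC_one, WMC_one, hsetl]
    exact div_self (by rw [WMC_one] at hDl; exact ne_of_gt hDl)
end

section
/- If Δ_h is both a sound and a complete abstraction of Δ_l relative to m (unweighted setting), then for every high-level formula φ: Pr(φ, Δ_h) > 0 iff Pr(m(φ), Δ_l) > 0, and Pr(φ, Δ_h) = 1 iff Pr(m(φ), Δ_l) = 1. -/
lemma wmc_one {α : Type} [Fintype α] [DecidableEq α] (Δ : Form α) :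
    WMC Δ (fun _ _ => (1:ℝ)) =
      ((Finset.univ.filter (fun M : α → Bool => Δ.eval M = true)).card : ℝ) := by
  simp [WMC]

lemma pr_pos_iff {α : Type} [Fintype α] [DecidableEq α] (φ Δ : Form α)
    (hsat : ∃ M : α → Bool, Δ.eval M = true) :
    (0 < Pr φ Δ (fun _ _ => (1:ℝ)) ↔ ∃ M : α → Bool, φ.eval M = true ∧ Δ.eval M = true) := by
  obtain ⟨M0, hM0⟩ := hsat
  have hD : (0:ℝ) < ((Finset.univ.filter (fun M : α → Bool => Δ.eval M = true)).card : ℝ) := by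
    have : M0 ∈ Finset.univ.filter (fun M : α → Bool => Δ.eval M = true) := by
      simp [hM0]
    exact_mod_cast Finset.card_pos.mpr ⟨M0, this⟩
  rw [Pr, wmc_one, wmc_one, div_pos_iff]
  constructor
  · rintro (⟨h1, _⟩ | ⟨_, h2⟩)
    · have := Finset.card_pos.mp (by exact_mod_cast h1)
      obtain ⟨M, hM⟩ := this
      simp [Form.eval, Bool.and_eq_true] at hM
      exact ⟨M, hM⟩
    · exact absurd hD (not_lt.mpr h2.le)
  · rintro ⟨M, h1, h2⟩
    left
    refine ⟨?_, hD⟩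
    have : M ∈ Finset.univ.filter (fun M : α → Bool => (Form.conj φ Δ).eval M = true) := by
      simp [Form.eval, h1, h2]
    exact_mod_cast Finset.card_pos.mpr ⟨M, this⟩

lemma pr_one_iff {α : Type} [Fintype α] [DecidableEq α] (φ Δ : Form α)
    (hsat : ∃ M : α → Bool, Δ.eval M = true) :
    (Pr φ Δ (fun _ _ => (1:ℝ)) = 1 ↔ ∀ M : α → Bool, Δ.eval M = true → φ.eval M = true) := by
  obtain ⟨M0, hM0⟩ := hsat
  set S := Finset.univ.filter (fun M : α → Bool => Δ.eval M = true) with hS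
  set T := Finset.univ.filter (fun M : α → Bool => (Form.conj φ Δ).eval M = true) with hT
  have hsub : T ⊆ S := by
    intro M hM
    simp [hT, hS, Form.eval, Bool.and_eq_true] at hM ⊢
    exact hM.2
  have hD : (S.card : ℝ) ≠ 0 := by
    have : M0 ∈ S := by simp [hS, hM0]
    exact_mod_cast (Finset.card_pos.mpr ⟨M0, this⟩).ne'
  rw [Pr, wmc_one, wmc_one, ← hT, ← hS, div_eq_one_iff_eq hD]
  constructor
  · intro h M hM
    have hcard : T.card = S.card := by exact_mod_cast h
    have hTS : T = S := Finset.eq_of_subset_of_card_le hsub hcard.ge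
    have : M ∈ T := by rw [hTS]; simp [hS, hM]
    simp [hT, Form.eval, Bool.and_eq_true] at this
    exact this.1
  · intro h
    have hTS : T = S := by
      apply Finset.Subset.antisymm hsub
      intro M hM
      simp [hS] at hM
      simp [hT, Form.eval, hM, h M hM]
    rw [hTS]

theorem stmt7 {α β : Type} [Fintype α] [DecidableEq α] [Fintype β] [DecidableEq β]
    (Δh : Form α) (Δl : Form β) (m : α → Form β)
    (hsath : ∃ M : α → Bool, Δh.eval M = true)
    (hsatl : ∃ M : β → Bool, Δl.eval M = true)
    (hsound : ∀ Ml : β → Bool, Δl.eval Ml = true →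
      ∃ Mh : α → Bool, Δh.eval Mh = true ∧ Iso m Mh Ml)
    (hcomplete : ∀ Mh : α → Bool, Δh.eval Mh = true →
      ∃ Ml : β → Bool, Δl.eval Ml = true ∧ Iso m Mh Ml) :
    ∀ φ : Form α,
      (0 < Pr φ Δh (fun _ _ => (1:ℝ)) ↔ 0 < Pr (φ.map m) Δl (fun _ _ => (1:ℝ))) ∧
      (Pr φ Δh (fun _ _ => (1:ℝ)) = 1 ↔ Pr (φ.map m) Δl (fun _ _ => (1:ℝ)) = 1) := by
  intro φ
  constructor
  · rw [pr_pos_iff _ _ hsath, pr_pos_iff _ _ hsatl]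
    constructor
    · rintro ⟨Mh, h1, h2⟩
      obtain ⟨Ml, hMl, hiso⟩ := hcomplete Mh h2
      exact ⟨Ml, by rw [eval_map m Mh Ml hiso]; exact h1, hMl⟩
    · rintro ⟨Ml, h1, h2⟩
      obtain ⟨Mh, hMh, hiso⟩ := hsound Ml h2
      exact ⟨Mh, by rw [← eval_map m Mh Ml hiso]; exact h1, hMh⟩
  · rw [pr_one_iff _ _ hsath, pr_one_iff _ _ hsatl]
    constructor
    · intro h Ml hMl
      obtain ⟨Mh, hMh, hiso⟩ := hsound Ml hMl
      rw [eval_map m Mh Ml hiso]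
      exact h Mh hMh
    · intro h Mh hMh
      obtain ⟨Ml, hMl, hiso⟩ := hcomplete Mh hMh
      rw [← eval_map m Mh Ml hiso]
      exact h Ml hMl
end

section
/- Suppose (Δ_h, w_h) is a weighted exact abstraction of (Δ_l, w_l) relative to m, e is a low-level literal, and e is logically equivalent to m(m⁻¹(e)), where m⁻¹(e) is the disjunction of all high-level atoms p such that e is mentioned and pure in the CNF of m(p). Then for every high-level formula φ, Pr(φ | m⁻¹(e), Δ_h, w_h) = Pr(m(φ) | e, Δ_l, w_l). -/
/-- Conditional probability `Pr(φ | e, Δ, w) = WMC(φ∧e∧Δ,w)/WMC(e∧Δ,w)`. -/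
noncomputable def PrCond {α : Type} [Fintype α] [DecidableEq α]
    (φ e Δ : Form α) (w : α → Bool → ℝ) : ℝ :=
  WMC (Form.conj φ (Form.conj e Δ)) w / WMC (Form.conj e Δ) w

/-- A formula is a literal: an atom or a negated atom. -/
def Form.IsLit {α : Type} : Form α → Prop
  | .atom _ => True
  | .neg (.atom _) => True
  | _ => False

/-- A formula that is a disjunction of atoms. -/
def Form.IsAtomDisj {α : Type} : Form α → Prop
  | .atom _ => True
  | .disj φ ψ => φ.IsAtomDisj ∧ ψ.IsAtomDisj
  | _ => False

section

variable {α : Type} [Fintype α] [DecidableEq α]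

lemma WMC_congr {φ ψ : Form α} (h : ∀ M : α → Bool, φ.eval M = ψ.eval M)
    (w : α → Bool → ℝ) : WMC φ w = WMC ψ w := by
  unfold WMC
  simp only [h]

lemma Pr_congr {φ ψ : Form α} (h : ∀ M : α → Bool, φ.eval M = ψ.eval M)
    (Δ : Form α) (w : α → Bool → ℝ) : Pr φ Δ w = Pr ψ Δ w := by
  unfold Pr
  rw [WMC_congr (φ := φ.conj Δ) (ψ := ψ.conj Δ) (by simp only [Form.eval, h, implies_true])]

lemma PrCond_eq_div_Pr {Δ : Form α} {w : α → Bool → ℝ} (hΔ : WMC Δ w ≠ 0)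
    (φ e : Form α) : PrCond φ e Δ w = Pr (φ.conj e) Δ w / Pr e Δ w := by
  unfold PrCond Pr
  rw [div_div_div_cancel_right₀ hΔ,
    WMC_congr (φ := φ.conj (e.conj Δ)) (ψ := (φ.conj e).conj Δ)
      (by simp only [Form.eval, Bool.and_assoc, implies_true])]

end

theorem stmt13_general {α β : Type} [Fintype α] [DecidableEq α] [Fintype β] [DecidableEq β]
    (Δh : Form α) (Δl : Form β) (wh : α → Bool → ℝ) (wl : β → Bool → ℝ) (m : α → Form β)
    (e : Form β) (Eh : Form α)
    (hΔh : WMC Δh wh ≠ 0) (hΔl : WMC Δl wl ≠ 0)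
    (hexact : ∀ ψ : Form α, Pr ψ Δh wh = Pr (ψ.map m) Δl wl)
    -- `Eh` plays the role of the concretization `m⁻¹(e)`: a disjunction of
    -- high-level atoms whose image under `m` is logically equivalent to `e`.
    (hequiv : ∀ M : β → Bool, e.eval M = (Eh.map m).eval M) :
    ∀ φ : Form α, PrCond φ Eh Δh wh = PrCond (φ.map m) e Δl wl := by
  intro φ
  have hEh_map : Pr (Eh.map m) Δl wl = Pr e Δl wl :=
    Pr_congr (fun M => (hequiv M).symm) Δl wl
  have hconj_map : Pr ((φ.conj Eh).map m) Δl wl = Pr ((φ.map m).conj e) Δl wl :=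
    Pr_congr (by simp only [Form.map, Form.eval, hequiv, implies_true]) Δl wl
  rw [PrCond_eq_div_Pr hΔh, PrCond_eq_div_Pr hΔl, hexact, hexact, hEh_map, hconj_map]

theorem stmt13 {α β : Type} [Fintype α] [DecidableEq α] [Fintype β] [DecidableEq β]
    (Δh : Form α) (Δl : Form β) (wh : α → Bool → ℝ) (wl : β → Bool → ℝ) (m : α → Form β)
    (e : Form β) (Eh : Form α)
    (hwh : ∀ a b, 0 ≤ wh a b) (hwl : ∀ a b, 0 ≤ wl a b)
    (hΔh : WMC Δh wh ≠ 0) (hΔl : WMC Δl wl ≠ 0)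
    (hsound : ∀ Ml : β → Bool, Δl.eval Ml = true →
      ∃ Mh : α → Bool, Δh.eval Mh = true ∧ Iso m Mh Ml)
    (hcomplete : ∀ Mh : α → Bool, Δh.eval Mh = true →
      ∃ Ml : β → Bool, Δl.eval Ml = true ∧ Iso m Mh Ml)
    (hexact : ∀ ψ : Form α, Pr ψ Δh wh = Pr (ψ.map m) Δl wl)
    (hlit : e.IsLit)
    -- `Eh` plays the role of the concretization `m⁻¹(e)`: a disjunction of
    -- high-level atoms whose image under `m` is logically equivalent to `e`.
    (hEh : Eh.IsAtomDisj)
    (hequiv : ∀ M : β → Bool, e.eval M = (Eh.map m).eval M)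
    (hce : WMC (Form.conj e Δl) wl ≠ 0)
    (hcEh : WMC (Form.conj Eh Δh) wh ≠ 0) :
    ∀ φ : Form α, PrCond φ Eh Δh wh = PrCond (φ.map m) e Δl wl :=
  stmt13_general Δh Δl wh wl m e Eh hΔh hΔl hexact hequiv
end

section
/- Suppose for each i = 1,…,k, ψ_i is a complete abstraction of φ_i relative to mapping m_i, the φ_i pairwise share no atoms, and the ψ_i pairwise share no atoms. Then Δ_h = ψ_1 ∧ … ∧ ψ_k is a complete abstraction of Δ_l = φ_1 ∧ … ∧ φ_k relative to the composite mapping m combining the m_i. -/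
theorem eval_congr {α : Type} [DecidableEq α] (f : Form α) :
    ∀ M M' : α → Bool, (∀ a ∈ f.atoms, M a = M' a) → f.eval M = f.eval M' := by
  induction f with
  | tru => intros; rfl
  | atom a => intro M M' h; exact h a (by simp [Form.atoms])
  | neg f ih =>
      intro M M' h
      simp [Form.eval, ih M M' (fun a ha => h a (by simpa [Form.atoms] using ha))]
  | conj f g ihf ihg =>
      intro M M' h
      simp [Form.eval,
        ihf M M' (fun a ha => h a (by simp [Form.atoms]; exact Or.inl ha)),
        ihg M M' (fun a ha => h a (by simp [Form.atoms]; exact Or.inr ha))]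
  | disj f g ihf ihg =>
      intro M M' h
      simp [Form.eval,
        ihf M M' (fun a ha => h a (by simp [Form.atoms]; exact Or.inl ha)),
        ihg M M' (fun a ha => h a (by simp [Form.atoms]; exact Or.inr ha))]

theorem stmt18 {H L : Type} [DecidableEq H] [DecidableEq L] (k : ℕ)
    (ψ : Fin k → Form H) (φ : Fin k → Form L) (m : H → Form L)
    (hψdisj : ∀ i j, i ≠ j → Disjoint (ψ i).atoms (ψ j).atoms)
    (hφdisj : ∀ i j, i ≠ j → Disjoint (φ i).atoms (φ j).atoms)
    -- the composite mapping agrees with `m_i` on the atoms of `ψ_i`, and each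
    -- `m_i` maps into the language of `φ_i`
    (hrange : ∀ i, ∀ a ∈ (ψ i).atoms, (m a).atoms ⊆ (φ i).atoms)
    -- each `ψ_i` is a complete abstraction of `φ_i` relative to `m_i`
    (hcomp : ∀ i, ∀ Mh : H → Bool, (ψ i).eval Mh = true →
      ∃ Ml : L → Bool, (φ i).eval Ml = true ∧
        ∀ a ∈ (ψ i).atoms, Mh a = (m a).eval Ml) :
    ∀ Mh : H → Bool, (∀ i, (ψ i).eval Mh = true) →
      ∃ Ml : L → Bool, (∀ i, (φ i).eval Ml = true) ∧
        ∀ i, ∀ a ∈ (ψ i).atoms, Mh a = (m a).eval Ml := by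
  classical
  intro Mh hMh
  choose F hF1 hF2 using fun i => hcomp i Mh (hMh i)
  set Ml : L → Bool := fun l =>
    if h : ∃ i, l ∈ (φ i).atoms then F h.choose l else false with hMl
  have key : ∀ i, ∀ l ∈ (φ i).atoms, Ml l = F i l := by
    intro i l hl
    have hex : ∃ j, l ∈ (φ j).atoms := ⟨i, hl⟩
    have : hex.choose = i := by
      by_contra hne
      exact (Finset.disjoint_left.1 (hφdisj _ _ hne)) hex.choose_spec hl
    simp [hMl, dif_pos hex, this]
  refine ⟨Ml, fun i => ?_, fun i a ha => ?_⟩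
  · rw [eval_congr (φ i) Ml (F i) (key i)]; exact hF1 i
  · rw [eval_congr (m a) Ml (F i) (fun l hl => key i l (hrange i a ha hl))]
    exact hF2 i a ha
end
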